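/- arXiv:2602.20451 — 5 statements merged into one kernel-verified Lean document; each statement's English description precedes it below -/
import Mathlib

section
/- Let G be a group and let a1, a2, a3, a4 be elements of G satisfying the braid relations. Then the element W = a4 a3 a2 a1² a2 a3 a4 commutes with each of a1, a2, and a3. -/
private lemma swap_aux {G : Type*} [Group G] {a b : G} (h : a * b = b * a) (x : G) :
    a * (b * x) = b * (a * x) := by rw [← mul_assoc, h, mul_assoc]

private lemma braid_aux {G : Type*} [Group G] {a b : G} (h : a * b * a = b * a * b) (x : G) :
    a * (b * (a * x)) = b * (a * (b * x)) := by
  rw [← mul_assoc, ← mul_assoc, h, mul_assoc, mul_assoc]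

/-- W = a4 a3 a2 a1² a2 a3 a4 commutes with a1, a2, a3. -/
theorem W_commutes {G : Type*} [Group G] (a1 a2 a3 a4 : G)
    (h12 : a1 * a2 * a1 = a2 * a1 * a2)
    (h23 : a2 * a3 * a2 = a3 * a2 * a3)
    (h34 : a3 * a4 * a3 = a4 * a3 * a4)
    (h13 : a1 * a3 = a3 * a1)
    (h14 : a1 * a4 = a4 * a1)
    (h24 : a2 * a4 = a4 * a2) :
    Commute (a4 * a3 * a2 * a1 ^ 2 * a2 * a3 * a4) a1 ∧
      Commute (a4 * a3 * a2 * a1 ^ 2 * a2 * a3 * a4) a2 ∧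
      Commute (a4 * a3 * a2 * a1 ^ 2 * a2 * a3 * a4) a3 := by
  refine ⟨?_, ?_, ?_⟩
  · have key : ∀ x : G,
        a1 * (a4 * (a3 * (a2 * (a1 * (a1 * (a2 * (a3 * (a4 * x)))))))) =
        a4 * (a3 * (a2 * (a1 * (a1 * (a2 * (a3 * (a4 * (a1 * x)))))))) := by
      intro x
      rw [swap_aux h14, swap_aux h13, braid_aux h12,
          braid_aux h12.symm (a3 * (a4 * x)), swap_aux h13, swap_aux h14]
    have := (key 1).symm
    unfold Commute SemiconjBy
    simpa only [pow_two, mul_assoc, mul_one] using this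
  · have key : ∀ x : G,
        a2 * (a4 * (a3 * (a2 * (a1 * (a1 * (a2 * (a3 * (a4 * x)))))))) =
        a4 * (a3 * (a2 * (a1 * (a1 * (a2 * (a3 * (a4 * (a2 * x)))))))) := by
      intro x
      rw [swap_aux h24, braid_aux h23, swap_aux h13.symm, swap_aux h13.symm,
          braid_aux h23.symm, swap_aux h24]
    have := (key 1).symm
    unfold Commute SemiconjBy
    simpa only [pow_two, mul_assoc, mul_one] using this
  · have key : ∀ x : G,
        a3 * (a4 * (a3 * (a2 * (a1 * (a1 * (a2 * (a3 * (a4 * x)))))))) =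
        a4 * (a3 * (a2 * (a1 * (a1 * (a2 * (a3 * (a4 * (a3 * x)))))))) := by
      intro x
      rw [braid_aux h34, swap_aux h24.symm, swap_aux h14.symm, swap_aux h14.symm,
          swap_aux h24.symm, braid_aux h34.symm]
    have := (key 1).symm
    unfold Commute SemiconjBy
    simpa only [pow_two, mul_assoc, mul_one] using this
end

section
/- Let G be a group and let a2, a3, a4 be elements of G satisfying a3 a4 a3 = a4 a3 a4, a2 a3 a2 = a3 a2 a3, and a2 a4 = a4 a2. Then a4² a3 a2 a3 a4 = a2 a3 a4 a3² a2. -/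
/-- the word identity 44323 4 = 23433 22 in the form
a4² a3 a2 a3 a4 = a2 a3 a4 a3² a2. -/
theorem word_44234 {G : Type*} [Group G] (a2 a3 a4 : G)
    (h34 : a3 * a4 * a3 = a4 * a3 * a4)
    (h23 : a2 * a3 * a2 = a3 * a2 * a3)
    (h24 : a2 * a4 = a4 * a2) :
    a4 ^ 2 * a3 * a2 * a3 * a4 = a2 * a3 * a4 * a3 ^ 2 * a2 := by
  have h34' : ∀ x : G, a3 * (a4 * (a3 * x)) = a4 * (a3 * (a4 * x)) := fun x => by
    rw [← mul_assoc, ← mul_assoc, h34, mul_assoc, mul_assoc]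
  have h23' : ∀ x : G, a2 * (a3 * (a2 * x)) = a3 * (a2 * (a3 * x)) := fun x => by
    rw [← mul_assoc, ← mul_assoc, h23, mul_assoc, mul_assoc]
  have h24' : ∀ x : G, a2 * (a4 * x) = a4 * (a2 * x) := fun x => by
    rw [← mul_assoc, h24, mul_assoc]
  simp only [pow_two, mul_assoc]
  rw [h34', h24', h34', h24', ← h24, h23']
end

section
/- Let G be a group and let a1, a2, a3, a4 be elements of G satisfying the braid relations. Then a4 a2 a1² a2 a3 a1² = a1² a2 a1² a2 a4 a3. -/
/-- the word identity 42112311 = (112)(11243). -/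
theorem word_42112311 {G : Type*} [Group G] (a1 a2 a3 a4 : G)
    (h12 : a1 * a2 * a1 = a2 * a1 * a2)
    (h23 : a2 * a3 * a2 = a3 * a2 * a3)
    (h34 : a3 * a4 * a3 = a4 * a3 * a4)
    (h13 : a1 * a3 = a3 * a1)
    (h14 : a1 * a4 = a4 * a1)
    (h24 : a2 * a4 = a4 * a2) :
    a4 * a2 * a1 ^ 2 * a2 * a3 * a1 ^ 2 =
      a1 ^ 2 * a2 * a1 ^ 2 * a2 * a4 * a3 := by
  have key : a2 * a1 ^ 2 * a2 * a1 ^ 2 = a1 ^ 2 * a2 * a1 ^ 2 * a2 := by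
    have L : a2 * a1 ^ 2 * a2 * a1 ^ 2 = (a1 * a2 * a1) * (a2 * a1 * a2) := by
      calc a2 * a1 ^ 2 * a2 * a1 ^ 2
          = a2 * a1 * (a1 * a2 * a1) * a1 := by simp only [pow_two]; group
        _ = a2 * a1 * (a2 * a1 * a2) * a1 := by rw [h12]
        _ = (a2 * a1 * a2) * (a1 * a2 * a1) := by group
        _ = (a1 * a2 * a1) * (a2 * a1 * a2) := by rw [h12]
    have R : a1 ^ 2 * a2 * a1 ^ 2 * a2 = (a1 * a2 * a1) * (a2 * a1 * a2) := by
      calc a1 ^ 2 * a2 * a1 ^ 2 * a2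
          = a1 * (a1 * a2 * a1) * (a1 * a2) := by simp only [pow_two]; group
        _ = a1 * (a2 * a1 * a2) * (a1 * a2) := by rw [h12]
        _ = (a1 * a2 * a1) * (a2 * a1 * a2) := by group
    exact L.trans R.symm
  calc a4 * a2 * a1 ^ 2 * a2 * a3 * a1 ^ 2
      = a4 * (a2 * a1 ^ 2 * a2 * (a3 * a1) * a1) := by simp only [pow_two]; group
    _ = a4 * (a2 * a1 ^ 2 * a2 * (a1 * a3) * a1) := by rw [h13]
    _ = a4 * (a2 * a1 ^ 2 * a2 * a1 * (a3 * a1)) := by simp only [pow_two]; group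
    _ = a4 * (a2 * a1 ^ 2 * a2 * a1 * (a1 * a3)) := by rw [h13]
    _ = a4 * ((a2 * a1 ^ 2 * a2 * a1 ^ 2) * a3) := by simp only [pow_two]; group
    _ = a4 * ((a1 ^ 2 * a2 * a1 ^ 2 * a2) * a3) := by rw [key]
    _ = (a4 * a1) * (a1 * a2 * a1 ^ 2 * a2 * a3) := by simp only [pow_two]; group
    _ = (a1 * a4) * (a1 * a2 * a1 ^ 2 * a2 * a3) := by rw [h14]
    _ = a1 * (a4 * a1) * (a2 * a1 ^ 2 * a2 * a3) := by simp only [pow_two]; group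
    _ = a1 * (a1 * a4) * (a2 * a1 ^ 2 * a2 * a3) := by rw [h14]
    _ = a1 ^ 2 * (a4 * a2) * (a1 ^ 2 * a2 * a3) := by simp only [pow_two]; group
    _ = a1 ^ 2 * (a2 * a4) * (a1 ^ 2 * a2 * a3) := by rw [h24]
    _ = a1 ^ 2 * a2 * (a4 * a1) * (a1 * a2 * a3) := by simp only [pow_two]; group
    _ = a1 ^ 2 * a2 * (a1 * a4) * (a1 * a2 * a3) := by rw [h14]
    _ = a1 ^ 2 * a2 * a1 * (a4 * a1) * (a2 * a3) := by simp only [pow_two]; group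
    _ = a1 ^ 2 * a2 * a1 * (a1 * a4) * (a2 * a3) := by rw [h14]
    _ = a1 ^ 2 * a2 * a1 ^ 2 * (a4 * a2) * a3 := by simp only [pow_two]; group
    _ = a1 ^ 2 * a2 * a1 ^ 2 * (a2 * a4) * a3 := by rw [h24]
    _ = a1 ^ 2 * a2 * a1 ^ 2 * a2 * a4 * a3 := by simp only [pow_two]; group
end

section
/- Let G be a group and let d, s, e, c, f, g, a be elements of G. Set p = (d s) e (d s)⁻¹ and q = f⁻¹ c f. Then the 7-tuple (p, d, s, f, q, g, a) can be transformed into the 7-tuple (d, s, e, c, f, g, a) by a finite sequence of elementary Hurwitz moves and their inverses; in particular, p d s f q g a = d s e c f g a. (This is the algebraic content of the equivalence between Xiao's factorization t_P t_{R3} t_{Q3} t_{R2} t_{Q2} t_{R1} t_{Q1} = 1 and a cyclic permutation of Hamada's factorization t_α t_D t_σ t_E t_γ t_F t_G = 1, using the curve identities R3 = D, Q3 = σ, R2 = F, R1 = G, Q1 = α, t_σ⁻¹ t_D⁻¹(P) = E, and t_F(Q2) = γ.) -/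
/-- An elementary Hurwitz move on a tuple of group elements replaces a
consecutive pair `(a, b)` by `(a * b * a⁻¹, a)`, leaving all other entries
unchanged. -/
def IsHurwitzMove {G : Type*} [Group G] (L L' : List G) : Prop :=
  ∃ (l r : List G) (a b : G),
    L = l ++ [a, b] ++ r ∧ L' = l ++ [a * b * a⁻¹, a] ++ r

/-- with p = (d s) e (d s)⁻¹ and q = f⁻¹ c f, the tuple
(p, d, s, f, q, g, a) is Hurwitz equivalent to (d, s, e, c, f, g, a);
in particular p d s f q g a = d s e c f g a. -/
theorem xiao_hamada_equivalence {G : Type*} [Group G] (d s e c f g a : G) :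
    Relation.ReflTransGen
        (fun x y => IsHurwitzMove x y ∨ IsHurwitzMove y x)
        [(d * s) * e * (d * s)⁻¹, d, s, f, f⁻¹ * c * f, g, a]
        [d, s, e, c, f, g, a] ∧
      (d * s) * e * (d * s)⁻¹ * d * s * f * (f⁻¹ * c * f) * g * a =
        d * s * e * c * f * g * a := by
  constructor
  · have h1 : Relation.ReflTransGen
        (fun x y => IsHurwitzMove x y ∨ IsHurwitzMove y x)
        [(d * s) * e * (d * s)⁻¹, d, s, f, f⁻¹ * c * f, g, a]
        [d, s * e * s⁻¹, s, f, f⁻¹ * c * f, g, a] := by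
      refine Relation.ReflTransGen.single (Or.inr ?_)
      refine ⟨[], [s, f, f⁻¹ * c * f, g, a], d, s * e * s⁻¹, rfl, ?_⟩
      simp only [List.nil_append]
      congr 1
      group
    have h2 : Relation.ReflTransGen
        (fun x y => IsHurwitzMove x y ∨ IsHurwitzMove y x)
        [d, s * e * s⁻¹, s, f, f⁻¹ * c * f, g, a]
        [d, s, e, f, f⁻¹ * c * f, g, a] := by
      refine Relation.ReflTransGen.single (Or.inr ?_)
      exact ⟨[d], [f, f⁻¹ * c * f, g, a], s, e, rfl, rfl⟩
    have h3 : Relation.ReflTransGen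
        (fun x y => IsHurwitzMove x y ∨ IsHurwitzMove y x)
        [d, s, e, f, f⁻¹ * c * f, g, a]
        [d, s, e, c, f, g, a] := by
      refine Relation.ReflTransGen.single (Or.inl ?_)
      have hc : f * (f⁻¹ * c * f) * f⁻¹ = c := by group
      exact ⟨[d, s, e], [g, a], f, f⁻¹ * c * f, rfl, by rw [hc]; rfl⟩
    exact h1.trans (h2.trans h3)
  · group
end

section
/- Let G be a group and let a1, a2, a3, a4 be elements of G satisfying the braid relations. Define W = a4 a3 a2 a1² a2 a3 a4 and W' = a3 a2 a1² a2 a3. Then a3 a2 a1² a2 · W · a3² a2 a1² a2 a3 · W = W' · W' · W · W. -/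
/-- with W = a4 a3 a2 a1² a2 a3 a4 and W' = a3 a2 a1² a2 a3,
the rearrangement 32112 W 3321123 W = W' W' W W. -/
theorem final_rearrangement {G : Type*} [Group G] (a1 a2 a3 a4 : G)
    (h12 : a1 * a2 * a1 = a2 * a1 * a2)
    (h23 : a2 * a3 * a2 = a3 * a2 * a3)
    (h34 : a3 * a4 * a3 = a4 * a3 * a4)
    (h13 : a1 * a3 = a3 * a1)
    (h14 : a1 * a4 = a4 * a1)
    (h24 : a2 * a4 = a4 * a2) :
    a3 * a2 * a1 ^ 2 * a2 * (a4 * a3 * a2 * a1 ^ 2 * a2 * a3 * a4) *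
        (a3 ^ 2 * a2 * a1 ^ 2 * a2 * a3) *
        (a4 * a3 * a2 * a1 ^ 2 * a2 * a3 * a4) =
      (a3 * a2 * a1 ^ 2 * a2 * a3) * (a3 * a2 * a1 ^ 2 * a2 * a3) *
        (a4 * a3 * a2 * a1 ^ 2 * a2 * a3 * a4) *
        (a4 * a3 * a2 * a1 ^ 2 * a2 * a3 * a4) := by
  -- right-associated versions of the braid relations, with a trailing variable
  have b12 : ∀ x : G, a1 * (a2 * (a1 * x)) = a2 * (a1 * (a2 * x)) := fun x => by
    rw [← mul_assoc, ← mul_assoc, h12, mul_assoc, mul_assoc]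
  have b23 : ∀ x : G, a2 * (a3 * (a2 * x)) = a3 * (a2 * (a3 * x)) := fun x => by
    rw [← mul_assoc, ← mul_assoc, h23, mul_assoc, mul_assoc]
  have b34 : ∀ x : G, a3 * (a4 * (a3 * x)) = a4 * (a3 * (a4 * x)) := fun x => by
    rw [← mul_assoc, ← mul_assoc, h34, mul_assoc, mul_assoc]
  have h34r : a3 * (a4 * a3) = a4 * (a3 * a4) := by
    rw [← mul_assoc, h34, mul_assoc]
  have h12r : a1 * (a2 * a1) = a2 * (a1 * a2) := by
    rw [← mul_assoc, h12, mul_assoc]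
  -- commutation swaps with a trailing variable
  have s13 : ∀ x : G, a3 * (a1 * x) = a1 * (a3 * x) := fun x => by
    rw [← mul_assoc, ← h13, mul_assoc]
  have s14 : ∀ x : G, a4 * (a1 * x) = a1 * (a4 * x) := fun x => by
    rw [← mul_assoc, ← h14, mul_assoc]
  have s24 : ∀ x : G, a4 * (a2 * x) = a2 * (a4 * x) := fun x => by
    rw [← mul_assoc, ← h24, mul_assoc]
  -- d = a1 a2 a3 a4 cycles generators up
  have hd1 : (a1 * (a2 * (a3 * a4))) * a1 = a2 * (a1 * (a2 * (a3 * a4))) := by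
    simp only [mul_assoc]
    rw [← h14, s13, b12]
  have hd2 : (a1 * (a2 * (a3 * a4))) * a2 = a3 * (a1 * (a2 * (a3 * a4))) := by
    simp only [mul_assoc]
    rw [← h24, b23, ← s13]
  have hd3 : (a1 * (a2 * (a3 * a4))) * a3 = a4 * (a1 * (a2 * (a3 * a4))) := by
    simp only [mul_assoc]
    rw [h34r, ← s24, ← s14]
  -- r = a4 a3 a2 a1 cycles generators down
  have hr2 : (a4 * (a3 * (a2 * a1))) * a2 = a1 * (a4 * (a3 * (a2 * a1))) := by
    simp only [mul_assoc]
    rw [← h12r, s13, s14]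
  have hr3 : (a4 * (a3 * (a2 * a1))) * a3 = a2 * (a4 * (a3 * (a2 * a1))) := by
    simp only [mul_assoc]
    rw [h13, ← b23, s24]
  have hr4 : (a4 * (a3 * (a2 * a1))) * a4 = a3 * (a4 * (a3 * (a2 * a1))) := by
    simp only [mul_assoc]
    rw [h14, ← s24, ← b34]
  -- W = r * d commutes with a1, a2, a3
  have hW1 : a1 * ((a4 * (a3 * (a2 * a1))) * (a1 * (a2 * (a3 * a4))))
      = ((a4 * (a3 * (a2 * a1))) * (a1 * (a2 * (a3 * a4)))) * a1 := by
    rw [← mul_assoc, ← hr2, mul_assoc, ← hd1, ← mul_assoc]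
  have hW2 : a2 * ((a4 * (a3 * (a2 * a1))) * (a1 * (a2 * (a3 * a4))))
      = ((a4 * (a3 * (a2 * a1))) * (a1 * (a2 * (a3 * a4)))) * a2 := by
    rw [← mul_assoc, ← hr3, mul_assoc, ← hd2, ← mul_assoc]
  have hW3 : a3 * ((a4 * (a3 * (a2 * a1))) * (a1 * (a2 * (a3 * a4))))
      = ((a4 * (a3 * (a2 * a1))) * (a1 * (a2 * (a3 * a4)))) * a3 := by
    rw [← mul_assoc, ← hr4, mul_assoc, ← hd3, ← mul_assoc]
  -- rewrite W in the goal form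
  have hWeq : a4 * a3 * a2 * a1 ^ 2 * a2 * a3 * a4
      = (a4 * (a3 * (a2 * a1))) * (a1 * (a2 * (a3 * a4))) := by
    simp only [pow_two, mul_assoc]
  have c1 : Commute (a4 * a3 * a2 * a1 ^ 2 * a2 * a3 * a4) a1 := by
    rw [hWeq]; exact hW1.symm
  have c2 : Commute (a4 * a3 * a2 * a1 ^ 2 * a2 * a3 * a4) a2 := by
    rw [hWeq]; exact hW2.symm
  have c3 : Commute (a4 * a3 * a2 * a1 ^ 2 * a2 * a3 * a4) a3 := by
    rw [hWeq]; exact hW3.symm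
  have key : Commute (a4 * a3 * a2 * a1 ^ 2 * a2 * a3 * a4)
      (a3 ^ 2 * a2 * a1 ^ 2 * a2 * a3) :=
    ((((c3.pow_right 2).mul_right c2).mul_right (c1.pow_right 2)).mul_right
      c2).mul_right c3
  calc a3 * a2 * a1 ^ 2 * a2 * (a4 * a3 * a2 * a1 ^ 2 * a2 * a3 * a4) *
        (a3 ^ 2 * a2 * a1 ^ 2 * a2 * a3) *
        (a4 * a3 * a2 * a1 ^ 2 * a2 * a3 * a4)
      = a3 * a2 * a1 ^ 2 * a2 * ((a4 * a3 * a2 * a1 ^ 2 * a2 * a3 * a4) *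
        (a3 ^ 2 * a2 * a1 ^ 2 * a2 * a3)) *
        (a4 * a3 * a2 * a1 ^ 2 * a2 * a3 * a4) := by
        rw [mul_assoc (a3 * a2 * a1 ^ 2 * a2)]
    _ = a3 * a2 * a1 ^ 2 * a2 * ((a3 ^ 2 * a2 * a1 ^ 2 * a2 * a3) *
        (a4 * a3 * a2 * a1 ^ 2 * a2 * a3 * a4)) *
        (a4 * a3 * a2 * a1 ^ 2 * a2 * a3 * a4) := by rw [key.eq]
    _ = (a3 * a2 * a1 ^ 2 * a2 * a3) * (a3 * a2 * a1 ^ 2 * a2 * a3) *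
        (a4 * a3 * a2 * a1 ^ 2 * a2 * a3 * a4) *
        (a4 * a3 * a2 * a1 ^ 2 * a2 * a3 * a4) := by
        simp only [pow_two, mul_assoc]
end
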